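/- arXiv:2112.08807 — 3 statements merged into one kernel-verified Lean document; each statement's English description precedes it below -/
import Mathlib

section
/- Let T be a regular tournament of order 2n+1 with n ≥ 5, let S ⊆ V(T) with |S| = k ≤ n/2, and let x, y be two distinct vertices of V(T) \ S. If the subtournament T − S contains no directed path from x to y of length 3, then T − S contains a directed path from x to y of length 4. -/
variable {V : Type*}

/-- A tournament: irreflexive, and between any two distinct vertices exactly one arc. -/
def IsTournament (T : V → V → Prop) : Prop :=
  (∀ v, ¬ T v v) ∧ ∀ x y : V, x ≠ y → (T x y ↔ ¬ T y x)

/-- Outdegree of a vertex. -/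
noncomputable def outdeg (T : V → V → Prop) (x : V) : ℕ := Nat.card {y : V // T x y}

/-- Indegree of a vertex. -/
noncomputable def indeg (T : V → V → Prop) (x : V) : ℕ := Nat.card {y : V // T y x}

/-- A tournament is regular if outdegree equals indegree at every vertex. -/
def RegularTournament (T : V → V → Prop) : Prop := ∀ v : V, outdeg T v = indeg T v

/-- There is a directed path of length `k` from `x` to `y` all of whose vertices lie in `D`. -/
def HasPathOn (T : V → V → Prop) (D : Set V) (x y : V) (k : ℕ) : Prop :=
  ∃ f : Fin (k+1) → V, Function.Injective f ∧ f 0 = x ∧ f (Fin.last k) = y ∧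
    (∀ i, f i ∈ D) ∧ ∀ i : Fin k, T (f i.castSucc) (f i.succ)

open Finset

private lemma vec4_inj {x a b y : V} (h1 : x ≠ a) (h2 : x ≠ b) (h3 : x ≠ y)
    (h4 : a ≠ b) (h5 : a ≠ y) (h6 : b ≠ y) :
    Function.Injective ![x, a, b, y] := by
  intro i j hij
  fin_cases i <;> fin_cases j <;> simp_all

private lemma vec5_inj {x a c b y : V} (h1 : x ≠ a) (h2 : x ≠ c) (h3 : x ≠ b) (h4 : x ≠ y)
    (h5 : a ≠ c) (h6 : a ≠ b) (h7 : a ≠ y) (h8 : c ≠ b) (h9 : c ≠ y) (h10 : b ≠ y) :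
    Function.Injective ![x, a, c, b, y] := by
  intro i j hij
  fin_cases i <;> fin_cases j <;> simp_all

private lemma exists_small_outdeg [DecidableEq V] (T : V → V → Prop) [DecidableRel T]
    (hT2 : ∀ u v : V, u ≠ v → (T u v ↔ ¬ T v u)) (hirr : ∀ v, ¬ T v v)
    (s : Finset V) (hs : s.Nonempty) :
    ∃ a ∈ s, 2 * (s.filter (fun v => T a v)).card + 1 ≤ s.card := by
  by_contra hcon
  push_neg at hcon
  have key : ∀ a ∈ s, s.card ≤ 2 * (s.filter (fun v => T a v)).card := by
    intro a ha; have := hcon a ha; omega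
  have hsum1 : ∀ a ∈ s, (s.filter (fun v => T a v)).card + (s.filter (fun v => T v a)).card
      = s.card - 1 := by
    intro a ha
    have hdisj : Disjoint (s.filter (fun v => T a v)) (s.filter (fun v => T v a)) := by
      rw [Finset.disjoint_left]
      intro v hv1 hv2
      simp only [mem_filter] at hv1 hv2
      rcases eq_or_ne v a with rfl | hva
      · exact hirr v hv1.2
      · exact ((hT2 a v (Ne.symm hva)).mp hv1.2) hv2.2
    have hun : s.filter (fun v => T a v) ∪ s.filter (fun v => T v a) = s.erase a := by
      ext v
      simp only [mem_union, mem_filter, mem_erase]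
      constructor
      · rintro (⟨hvs, h⟩ | ⟨hvs, h⟩)
        · exact ⟨fun hva => hirr a (hva ▸ h), hvs⟩
        · exact ⟨fun hva => hirr a (hva ▸ h), hvs⟩
      · rintro ⟨hva, hvs⟩
        by_cases h : T a v
        · exact Or.inl ⟨hvs, h⟩
        · exact Or.inr ⟨hvs, ((hT2 v a hva).mpr h)⟩
    have := Finset.card_union_of_disjoint hdisj
    rw [hun, Finset.card_erase_of_mem ha] at this
    omega
  have hswap : ∑ a ∈ s, (s.filter (fun v => T a v)).card
      = ∑ a ∈ s, (s.filter (fun v => T v a)).card := by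
    simp only [Finset.card_filter]
    exact Finset.sum_comm
  have htot : 2 * ∑ a ∈ s, (s.filter (fun v => T a v)).card = s.card * (s.card - 1) := by
    have h : ∑ a ∈ s, ((s.filter (fun v => T a v)).card + (s.filter (fun v => T v a)).card)
        = s.card * (s.card - 1) := by
      rw [Finset.sum_congr rfl hsum1, Finset.sum_const, smul_eq_mul]
    rw [Finset.sum_add_distrib, ← hswap] at h
    omega
  have hge : s.card * s.card ≤ ∑ a ∈ s, 2 * (s.filter (fun v => T a v)).card := by
    calc s.card * s.card = ∑ _a ∈ s, s.card := by rw [Finset.sum_const, smul_eq_mul]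
    _ ≤ _ := Finset.sum_le_sum key
  rw [← Finset.mul_sum, htot] at hge
  have h1 : 1 ≤ s.card := hs.card_pos
  have := Nat.le_of_mul_le_mul_left (by linarith [hge] : s.card * s.card ≤ s.card * (s.card - 1)) (by omega)
  omega

private lemma deg_eq [Fintype V] [DecidableEq V] (T : V → V → Prop) [DecidableRel T]
    (hT : IsTournament T) (hreg : RegularTournament T) (n : ℕ)
    (hcard : Fintype.card V = 2 * n + 1) (v : V) :
    (univ.filter (fun w => T v w)).card = n ∧ (univ.filter (fun w => T w v)).card = n := by
  have ho : outdeg T v = (univ.filter (fun w => T v w)).card := by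
    rw [outdeg, Nat.card_eq_fintype_card, Fintype.card_subtype]
  have hi : indeg T v = (univ.filter (fun w => T w v)).card := by
    rw [indeg, Nat.card_eq_fintype_card, Fintype.card_subtype]
  have hdisj : Disjoint (univ.filter (fun w => T v w)) (univ.filter (fun w => T w v)) := by
    rw [Finset.disjoint_left]
    intro w h1 h2
    simp only [mem_filter] at h1 h2
    rcases eq_or_ne w v with rfl | hwv
    · exact hT.1 w h1.2
    · exact (hT.2 v w (Ne.symm hwv)).mp h1.2 h2.2
  have hun : univ.filter (fun w => T v w) ∪ univ.filter (fun w => T w v) = univ.erase v := by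
    ext w
    simp only [mem_union, mem_filter, mem_erase, mem_univ, true_and, and_true]
    constructor
    · rintro (h | h) <;> exact fun hwv => hT.1 v (hwv ▸ h)
    · intro hwv
      by_cases h : T v w
      · exact Or.inl h
      · exact Or.inr ((hT.2 w v hwv).mpr h)
  have hc := Finset.card_union_of_disjoint hdisj
  rw [hun, Finset.card_erase_of_mem (mem_univ v), Finset.card_univ, hcard] at hc
  have := hreg v
  rw [ho, hi] at this
  omega

/-- In a regular tournament of order 2n+1, n ≥ 5, removing a set S with |S| ≤ n/2:
if there is no (x,y)-path of length 3 in T − S then there is one of length 4. -/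
theorem stmt6 {V : Type*} [Fintype V] [DecidableEq V] (T : V → V → Prop)
    (hT : IsTournament T) (hreg : RegularTournament T) (n : ℕ) (hn : 5 ≤ n)
    (hcard : Fintype.card V = 2 * n + 1) (S : Finset V) (hS : 2 * S.card ≤ n)
    (x y : V) (hxy : x ≠ y) (hxS : x ∉ S) (hyS : y ∉ S)
    (h3 : ¬ HasPathOn T {v | v ∉ S} x y 3) :
    HasPathOn T {v | v ∉ S} x y 4 := by
  classical
  obtain ⟨hirr, ht2⟩ := hT
  have no3 : ∀ a b : V, a ∉ S → b ∉ S → T x a → a ≠ y → T b y → b ≠ x → a ≠ b → ¬ T a b := by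
    intro a b haS hbS hxa hay hby hbx hab hTab
    apply h3
    have hxa' : x ≠ a := by rintro rfl; exact hirr x hxa
    have hby' : b ≠ y := by rintro rfl; exact hirr b hby
    refine ⟨![x, a, b, y], vec4_inj hxa' (Ne.symm hbx) hxy hab hay hby', rfl, rfl, ?_, ?_⟩
    · intro i
      fin_cases i <;> simpa using by first | exact hxS | exact haS | exact hbS | exact hyS
    · intro i
      fin_cases i
      · exact hxa
      · exact hTab
      · exact hby
  set k := S.card with hk
  set A' : Finset V := univ.filter (fun v => v ∉ S ∧ T x v ∧ v ≠ y) with hA'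
  set B' : Finset V := univ.filter (fun v => v ∉ S ∧ T v y ∧ v ≠ x) with hB'
  have memA' : ∀ v, v ∈ A' ↔ (v ∉ S ∧ T x v ∧ v ≠ y) := by
    intro v; simp [hA']
  have memB' : ∀ v, v ∈ B' ↔ (v ∉ S ∧ T v y ∧ v ≠ x) := by
    intro v; simp [hB']
  set A2 : Finset V := A' \ B' with hA2
  set B2 : Finset V := B' \ A' with hB2
  set R : Finset V := univ \ (S ∪ A' ∪ B' ∪ {x, y}) with hR
  have memR : ∀ v, v ∈ R ↔ (v ∉ S ∧ v ∉ A' ∧ v ∉ B' ∧ v ≠ x ∧ v ≠ y) := by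
    intro v
    rw [hR]
    simp only [mem_sdiff, mem_univ, true_and, mem_union, mem_insert, mem_singleton]
    tauto
  have degs : ∀ v : V, (univ.filter (fun w => T v w)).card = n ∧
      (univ.filter (fun w => T w v)).card = n :=
    fun v => deg_eq T ⟨hirr, ht2⟩ hreg n hcard v
  -- |A'| ≥ n - k - 1
  have hA'card : n ≤ A'.card + k + 1 := by
    have hsub : univ.filter (fun v => T x v) ⊆ A' ∪ S ∪ {y} := by
      intro v hv
      simp only [mem_filter, mem_univ, true_and] at hv
      simp only [mem_union, mem_singleton]
      by_cases h1 : v ∈ S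
      · exact Or.inl (Or.inr h1)
      by_cases h2 : v = y
      · exact Or.inr h2
      · exact Or.inl (Or.inl ((memA' v).mpr ⟨h1, hv, h2⟩))
    have hle := Finset.card_le_card hsub
    have h2 := Finset.card_union_le (A' ∪ S) ({y} : Finset V)
    have h3 := Finset.card_union_le A' S
    rw [(degs x).1] at hle
    simp only [Finset.card_singleton] at h2
    omega
  have hB'card : n ≤ B'.card + k + 1 := by
    have hsub : univ.filter (fun v => T v y) ⊆ B' ∪ S ∪ {x} := by
      intro v hv
      simp only [mem_filter, mem_univ, true_and] at hv
      simp only [mem_union, mem_singleton]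
      by_cases h1 : v ∈ S
      · exact Or.inl (Or.inr h1)
      by_cases h2 : v = x
      · exact Or.inr h2
      · exact Or.inl (Or.inl ((memB' v).mpr ⟨h1, hv, h2⟩))
    have hle := Finset.card_le_card hsub
    have h2 := Finset.card_union_le (B' ∪ S) ({x} : Finset V)
    have h3 := Finset.card_union_le B' S
    rw [(degs y).2] at hle
    simp only [Finset.card_singleton] at h2
    omega
  -- |A' ∩ B'| ≤ 1
  have hAB1 : (A' ∩ B').card ≤ 1 := by
    rw [Finset.card_le_one]
    intro u hu v hv
    by_contra huv
    rw [mem_inter, memA', memB'] at hu hv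
    obtain ⟨⟨huS, hxu, huy⟩, _, huy', hux⟩ := hu
    obtain ⟨⟨hvS, hxv, hvy⟩, _, hvy', hvx⟩ := hv
    by_cases h : T u v
    · exact no3 u v huS hvS hxu huy hvy' hvx huv h
    · exact no3 v u hvS huS hxv hvy huy' hux (Ne.symm huv) ((ht2 v u (Ne.symm huv)).mpr h)
  have hA2card : A2.card + (A' ∩ B').card = A'.card := by
    rw [hA2]; exact Finset.card_sdiff_add_card_inter A' B'
  have hB2card : B2.card + (A' ∩ B').card = B'.card := by
    rw [hB2, Finset.inter_comm]; exact Finset.card_sdiff_add_card_inter B' A'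
  -- size of R
  have hRcard : R.card + (A2.card + B2.card + (A' ∩ B').card + k + 2) = 2 * n + 1 := by
    have hxy2 : ({x, y} : Finset V).card = 2 := by
      rw [Finset.card_insert_of_notMem (by simpa using hxy), Finset.card_singleton]
    have hd1 : Disjoint A2 B' := by
      rw [Finset.disjoint_left]; intro v hv hv'
      rw [hA2, mem_sdiff] at hv; exact hv.2 hv'
    have hAuB : (A' ∪ B').card = A2.card + B'.card := by
      have : A' ∪ B' = A2 ∪ B' := by
        rw [hA2, Finset.sdiff_union_self_eq_union]
      rw [this, Finset.card_union_of_disjoint hd1]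
    have hd2 : Disjoint S (A' ∪ B') := by
      rw [Finset.disjoint_left]; intro v hv hv'
      rcases Finset.mem_union.mp hv' with h | h
      · exact ((memA' v).mp h).1 hv
      · exact ((memB' v).mp h).1 hv
    have hd3 : Disjoint (S ∪ A' ∪ B') ({x, y} : Finset V) := by
      rw [Finset.disjoint_right]
      intro v hv hv'
      rcases Finset.mem_insert.mp hv with rfl | hv
      · rcases Finset.mem_union.mp hv' with h | h
        · rcases Finset.mem_union.mp h with h' | h'
          · exact hxS h'
          · exact (hirr _) ((memA' _).mp h').2.1
        · exact ((memB' _).mp h).2.2 rfl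
      · rcases Finset.mem_singleton.mp hv with rfl
        rcases Finset.mem_union.mp hv' with h | h
        · rcases Finset.mem_union.mp h with h' | h'
          · exact hyS h'
          · exact ((memA' v).mp h').2.2 rfl
        · exact (hirr v) ((memB' v).mp h).2.1
    have hUcard : (S ∪ A' ∪ B' ∪ {x, y}).card = k + (A' ∪ B').card + 2 := by
      rw [Finset.card_union_of_disjoint hd3, Finset.union_assoc,
        Finset.card_union_of_disjoint hd2, hxy2]
    have hsubU : S ∪ A' ∪ B' ∪ {x, y} ⊆ univ := Finset.subset_univ _
    have hRc : R.card = Fintype.card V - (S ∪ A' ∪ B' ∪ {x, y}).card := by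
      rw [hR, Finset.card_sdiff_of_subset hsubU, Finset.card_univ]
    have hle : (S ∪ A' ∪ B' ∪ {x, y}).card ≤ Fintype.card V := by
      rw [← Finset.card_univ]; exact Finset.card_le_card hsubU
    rw [hcard] at hRc hle
    omega
  -- choose a in A2 of small out-degree within A2
  have hA2ne : A2.Nonempty := by
    rw [← Finset.card_pos]; omega
  obtain ⟨a, haA2, hda⟩ := exists_small_outdeg T ht2 hirr A2 hA2ne
  have haA' : a ∈ A' := (Finset.mem_sdiff.mp haA2).1
  have haB' : a ∉ B' := (Finset.mem_sdiff.mp haA2).2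
  obtain ⟨haS, hxa, hay⟩ := (memA' a).mp haA'
  have hax : a ≠ x := by rintro rfl; exact hirr a hxa
  have hnaty : ¬ T a y := by
    intro h; exact haB' ((memB' a).mpr ⟨haS, h, hax⟩)
  have hnatx : ¬ T a x := (ht2 x a (Ne.symm hax)).mp hxa
  -- choose b in B2 of small in-degree within B2
  have hB2ne : B2.Nonempty := by
    rw [← Finset.card_pos]; omega
  obtain ⟨b, hbB2, hdb⟩ := exists_small_outdeg (fun u v => T v u)
    (fun u v huv => ht2 v u (Ne.symm huv)) hirr B2 hB2ne
  have hbB' : b ∈ B' := (Finset.mem_sdiff.mp hbB2).1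
  have hbA' : b ∉ A' := (Finset.mem_sdiff.mp hbB2).2
  obtain ⟨hbS, hby, hbx⟩ := (memB' b).mp hbB'
  have hbyne : b ≠ y := by rintro rfl; exact hirr b hby
  have hnxb : ¬ T x b := by
    intro h; exact hbA' ((memA' b).mpr ⟨hbS, h, hbyne⟩)
  have hnyb : ¬ T y b := (ht2 b y hbyne).mp hby
  -- the neighborhoods in R
  set Ra : Finset V := R.filter (fun v => T a v) with hRa
  set Rb : Finset V := R.filter (fun v => T v b) with hRb
  have hNa : n ≤ k + (A2.filter (fun v => T a v)).card + Ra.card := by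
    have hsub : univ.filter (fun v => T a v) ⊆ S ∪ A2.filter (fun v => T a v) ∪ Ra := by
      intro v hv
      simp only [mem_filter, mem_univ, true_and] at hv
      simp only [mem_union, mem_filter]
      by_cases h1 : v ∈ S
      · exact Or.inl (Or.inl h1)
      have hvx : v ≠ x := by rintro rfl; exact hnatx hv
      have hvy : v ≠ y := by rintro rfl; exact hnaty hv
      have hvB' : v ∉ B' := by
        intro hvB
        obtain ⟨hvS, hvty, hvnx⟩ := (memB' v).mp hvB
        have hav : a ≠ v := by rintro rfl; exact haB' hvB
        exact no3 a v haS hvS hxa hay hvty hvnx hav hv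
      by_cases h2 : v ∈ A'
      · exact Or.inl (Or.inr ⟨Finset.mem_sdiff.mpr ⟨h2, hvB'⟩, hv⟩)
      · refine Or.inr ?_
        rw [hRa, Finset.mem_filter]
        exact ⟨(memR v).mpr ⟨h1, h2, hvB', hvx, hvy⟩, hv⟩
    have hle := Finset.card_le_card hsub
    have h2 := Finset.card_union_le (S ∪ A2.filter (fun v => T a v)) Ra
    have h3 := Finset.card_union_le S (A2.filter (fun v => T a v))
    rw [(degs a).1] at hle
    omega
  have hNb : n ≤ k + (B2.filter (fun v => T v b)).card + Rb.card := by
    have hsub : univ.filter (fun v => T v b) ⊆ S ∪ B2.filter (fun v => T v b) ∪ Rb := by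
      intro v hv
      simp only [mem_filter, mem_univ, true_and] at hv
      simp only [mem_union, mem_filter]
      by_cases h1 : v ∈ S
      · exact Or.inl (Or.inl h1)
      have hvx : v ≠ x := by rintro rfl; exact hnxb hv
      have hvy : v ≠ y := by rintro rfl; exact hnyb hv
      have hvA' : v ∉ A' := by
        intro hvA
        obtain ⟨hvS, hxv, hvny⟩ := (memA' v).mp hvA
        have hvb : v ≠ b := by rintro rfl; exact hbA' hvA
        exact no3 v b hvS hbS hxv hvny hby hbx hvb hv
      by_cases h2 : v ∈ B'
      · exact Or.inl (Or.inr ⟨Finset.mem_sdiff.mpr ⟨h2, hvA'⟩, hv⟩)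
      · refine Or.inr ?_
        rw [hRb, Finset.mem_filter]
        exact ⟨(memR v).mpr ⟨h1, hvA', h2, hvx, hvy⟩, hv⟩
    have hle := Finset.card_le_card hsub
    have h2 := Finset.card_union_le (S ∪ B2.filter (fun v => T v b)) Rb
    have h3 := Finset.card_union_le S (B2.filter (fun v => T v b))
    rw [(degs b).2] at hle
    omega
  -- Ra and Rb intersect
  have hcap : (Ra ∩ Rb).Nonempty := by
    rw [← Finset.card_pos]
    have hun := Finset.card_union_add_card_inter Ra Rb
    have hsubR : Ra ∪ Rb ⊆ R :=
      Finset.union_subset (Finset.filter_subset _ _) (Finset.filter_subset _ _)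
    have hle := Finset.card_le_card hsubR
    omega
  obtain ⟨c, hc⟩ := hcap
  rw [Finset.mem_inter, hRa, hRb, Finset.mem_filter, Finset.mem_filter] at hc
  obtain ⟨⟨hcR, hac⟩, _, hcb⟩ := hc
  obtain ⟨hcS, hcA', hcB', hcx, hcy⟩ := (memR c).mp hcR
  -- assemble the path
  have hca : c ≠ a := by rintro rfl; exact hcA' haA'
  have hcbne : c ≠ b := by rintro rfl; exact hcB' hbB'
  have hab : a ≠ b := by rintro rfl; exact hbA' haA'
  refine ⟨![x, a, c, b, y], vec5_inj (Ne.symm hax) (Ne.symm hcx) (Ne.symm hbx) hxy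
    (Ne.symm hca) hab hay hcbne hcy hbyne, rfl, rfl, ?_, ?_⟩
  · intro i
    fin_cases i <;> simpa using by first | exact hxS | exact haS | exact hcS | exact hbS | exact hyS
  · intro i
    fin_cases i
    · exact hxa
    · exact hac
    · exact hcb
    · exact hby
end

section
/- Let T be a regular tournament of order 2n+1 with n ≥ 3, let S ⊆ V(T) with |S| ≤ (n−1)/3, and let x, y be distinct vertices of V(T) \ S. Then T − S contains a directed (x,y)-path of length 3, unless T is isomorphic to a tournament from the family 𝒢. -/
variable {V : Type*}

/-- Every vertex of X dominates every vertex of Y. -/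
def Dom (T : V → V → Prop) (X Y : Set V) : Prop := ∀ a ∈ X, ∀ b ∈ Y, T a b

/-- Outdegree within the induced subtournament on `D`. -/
noncomputable def outdegOn (T : V → V → Prop) (D : Set V) (v : V) : ℕ :=
  Nat.card {u : V // u ∈ D ∧ T v u}

/-- Indegree within the induced subtournament on `D`. -/
noncomputable def indegOn (T : V → V → Prop) (D : Set V) (v : V) : ℕ :=
  Nat.card {u : V // u ∈ D ∧ T u v}

/-- The induced subtournament on `D` is regular. -/
def RegularOn (T : V → V → Prop) (D : Set V) : Prop :=
  ∀ v ∈ D, outdegOn T D v = indegOn T D v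

/-- `T` (with distinguished vertices x, y and set S) is a member of the family 𝒢:
a regular tournament of order 6k+3 ≥ 9 with vertex set {x,y,z} ∪ A ∪ B ∪ C ∪ S,
|A| = |C| = 2k−1, |B| = k+2, |S| = k, the subtournaments induced by A, C and
{z} ∪ B ∪ S regular, and A→(B∪S)→C, C→A, C→z→A, x→({y,z}∪A∪S),
({x,z}∪C∪S)→y, y→(A∪B), (B∪C)→x. -/
def FamilyGData (T : V → V → Prop) (x y : V) (S : Set V) : Prop :=
  IsTournament T ∧ RegularTournament T ∧
  ∃ (k : ℕ) (z : V) (A B C : Set V),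
    1 ≤ k ∧ Nat.card V = 6 * k + 3 ∧
    A.ncard = 2 * k - 1 ∧ C.ncard = 2 * k - 1 ∧ B.ncard = k + 2 ∧ S.ncard = k ∧
    x ≠ y ∧ x ≠ z ∧ y ≠ z ∧
    ({x, y, z} ∪ A ∪ B ∪ C ∪ S : Set V) = Set.univ ∧
    List.Pairwise Disjoint [({x, y, z} : Set V), A, B, C, S] ∧
    RegularOn T A ∧ RegularOn T C ∧ RegularOn T ({z} ∪ B ∪ S) ∧
    Dom T A (B ∪ S) ∧ Dom T (B ∪ S) C ∧ Dom T C A ∧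
    Dom T C {z} ∧ Dom T {z} A ∧
    Dom T {x} ({y, z} ∪ A ∪ S) ∧ Dom T ({x, z} ∪ C ∪ S) {y} ∧
    Dom T {y} (A ∪ B) ∧ Dom T (B ∪ C) {x}


/-!
Suppose `T - S` has no path `x → a → b → y`. Let `X` be the out-neighbours of `x` and `Y` the
in-neighbours of `y` outside `S ∪ {x, y}`, and `R` the vertices outside `X ∪ Y ∪ {x, y}`, so that
`S ⊆ R`. Every vertex of `Y` dominates every other vertex of `X`; hence `|X ∩ Y| ≤ 1`, and
`A = X \ Y` sends all its out-arcs into `A ∪ R`. The arcs inside `A` supply on average only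
`(|A| - 1) / 2` of the `n` out-arcs of a vertex of `A`, so `2n ≤ |A| - 1 + 2|R|`, and likewise for
`C = Y \ X`. Together with `|X|, |Y| ≥ n - |S| - 1`, `|V| = 2n + 1` and `3|S| + 1 ≤ n` these
counts leave no slack: `n = 3|S| + 1`, `X ∩ Y = {z}`, `A` dominates `R` and `R` dominates `C`.
Then every arc between the parts is forced, and they are those of the family 𝒢 with `B = R \ S`.
-/

open Finset Function
open scoped Classical

theorem outdegOn_coe (T : V → V → Prop) (D : Finset V) (v : V) :
    outdegOn T ↑D v = #{u ∈ D | T v u} := by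
  rw [← Nat.card_eq_finsetCard]
  simp [outdegOn]

theorem indegOn_coe (T : V → V → Prop) (D : Finset V) (v : V) :
    indegOn T ↑D v = #{u ∈ D | T u v} := by
  rw [← Nat.card_eq_finsetCard]
  simp [indegOn]

theorem regularOn_swap {T : V → V → Prop} {D : Set V} : RegularOn (swap T) D ↔ RegularOn T D :=
  forall₂_congr fun _ _ => eq_comm

theorem RegularTournament.swap {T : V → V → Prop} (hreg : RegularTournament T) :
    RegularTournament (swap T) :=
  fun v => (hreg v).symm

theorem dom_swap {T : V → V → Prop} {X Y : Set V} : Dom (swap T) X Y ↔ Dom T Y X :=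
  ⟨fun h a ha b hb => h b hb a ha, fun h a ha b hb => h b hb a ha⟩

theorem HasPathOn.reverse {T : V → V → Prop} {D : Set V} {x y : V} {k : ℕ}
    (h : HasPathOn T D x y k) : HasPathOn (swap T) D y x k := by
  obtain ⟨f, hf, h0, hlast, hD, hT⟩ := h
  refine ⟨f ∘ Fin.rev, hf.comp Fin.rev_injective, by simpa using hlast, by simpa using h0,
    fun i => hD _, fun i => ?_⟩
  simpa [Fin.rev_succ, Fin.rev_castSucc] using hT i.rev

theorem hasPathOn_three {T : V → V → Prop} {D : Set V} {x a b y : V}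
    (hx : x ∈ D) (ha : a ∈ D) (hb : b ∈ D) (hy : y ∈ D)
    (hxa : T x a) (hab : T a b) (hby : T b y)
    (h1 : x ≠ a) (h2 : x ≠ b) (h3 : x ≠ y) (h4 : a ≠ b) (h5 : a ≠ y) (h6 : b ≠ y) :
    HasPathOn T D x y 3 := by
  refine ⟨![x, a, b, y], ?_, rfl, rfl, ?_, ?_⟩
  · intro i j hij
    fin_cases i <;> fin_cases j <;> simp_all
  · intro i; fin_cases i <;> simpa
  · intro i; fin_cases i <;> simpa using ‹_›

namespace IsTournament

variable {T : V → V → Prop}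

theorem irrefl (hT : IsTournament T) (v : V) : ¬T v v := hT.1 v

theorem asymm (hT : IsTournament T) {a b : V} (hab : T a b) : ¬T b a := by
  rcases eq_or_ne a b with rfl | hne
  · exact hT.1 a
  · exact (hT.2 a b hne).1 hab

theorem ne_of_rel (hT : IsTournament T) {a b : V} (hab : T a b) : a ≠ b := by
  rintro rfl
  exact hT.irrefl a hab

theorem rel_of_not_rel (hT : IsTournament T) {a b : V} (hne : a ≠ b) (h : ¬T a b) : T b a :=
  (hT.2 b a hne.symm).2 h

protected theorem swap (hT : IsTournament T) : IsTournament (swap T) :=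
  ⟨hT.1, fun a b hne => hT.2 b a hne.symm⟩

theorem filter_rel_eq (hT : IsTournament T) {K E : Finset V} {v : V} (hEK : E ⊆ K)
    (hE : ∀ u ∈ E, T v u) (hKE : ∀ u ∈ K, u ∉ E → T u v) : {u ∈ K | T v u} = E := by
  ext u
  rw [mem_filter]
  refine ⟨fun ⟨huK, hvu⟩ => ?_, fun hu => ⟨hEK hu, hE u hu⟩⟩
  by_contra huE
  exact hT.asymm hvu (hKE u huK huE)

theorem card_filter_rel_add_card_filter_rel (hT : IsTournament T) {D : Finset V} {v : V}
    (hv : v ∈ D) : #{u ∈ D | T v u} + #{u ∈ D | T u v} = #D - 1 := by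
  have hdisj : Disjoint {u ∈ D | T v u} {u ∈ D | T u v} :=
    disjoint_filter.2 fun _ _ hvu => hT.asymm hvu
  have hunion : {u ∈ D | T v u} ∪ {u ∈ D | T u v} = D.erase v := by
    ext u
    simp only [mem_union, mem_filter, mem_erase]
    constructor
    · rintro (⟨hu, h⟩ | ⟨hu, h⟩)
      exacts [⟨(hT.ne_of_rel h).symm, hu⟩, ⟨hT.ne_of_rel h, hu⟩]
    · rintro ⟨hne, hu⟩
      by_cases h : T v u
      exacts [Or.inl ⟨hu, h⟩, Or.inr ⟨hu, hT.rel_of_not_rel hne.symm h⟩]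
  rw [← card_union_of_disjoint hdisj, hunion, card_erase_of_mem hv]

theorem two_mul_sum_card_filter_rel (hT : IsTournament T) (A : Finset V) :
    2 * ∑ a ∈ A, #{u ∈ A | T a u} = #A * (#A - 1) := by
  have hswap : ∑ a ∈ A, #{u ∈ A | T a u} = ∑ a ∈ A, #{u ∈ A | T u a} := by
    simp only [card_filter]
    exact sum_comm
  calc 2 * ∑ a ∈ A, #{u ∈ A | T a u}
      = ∑ a ∈ A, (#{u ∈ A | T a u} + #{u ∈ A | T u a}) := by
        rw [sum_add_distrib, ← hswap, two_mul]
    _ = #A * (#A - 1) := by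
        rw [sum_congr rfl fun a ha => hT.card_filter_rel_add_card_filter_rel ha, sum_const,
          smul_eq_mul]

theorem regularOn_of_two_mul_card_filter_add_one (hT : IsTournament T) {D : Finset V}
    (hD : ∀ v ∈ D, 2 * #{u ∈ D | T v u} + 1 = #D) : RegularOn T ↑D := by
  intro v hv
  have hsplit := hT.card_filter_rel_add_card_filter_rel (D := D) hv
  have hout := hD v hv
  rw [outdegOn_coe, indegOn_coe]
  omega

end IsTournament

theorem card_insert_union_le {α : Type*} [DecidableEq α] (a : α) (s t : Finset α) :
    #(insert a (s ∪ t)) ≤ #s + #t + 1 :=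
  (card_insert_le _ _).trans (by grw [card_union_le])

section Fintype

variable [Fintype V] {T : V → V → Prop}

theorem card_filter_add_card_filter_compl (D : Finset V) (p : V → Prop) :
    #{u ∈ D | p u} + #{u ∈ Dᶜ | p u} = #{u | p u} := by
  rw [← card_union_of_disjoint (disjoint_filter_filter disjoint_compl_right), ← filter_union,
    union_compl]

theorem outdeg_eq_card_filter (T : V → V → Prop) (v : V) : outdeg T v = #{u | T v u} := by
  rw [outdeg, Nat.card_eq_fintype_card, Fintype.card_subtype]

theorem RegularTournament.card_filter_rel (hT : IsTournament T) (hreg : RegularTournament T)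
    {n : ℕ} (hcard : Fintype.card V = 2 * n + 1) (v : V) : #{u | T v u} = n := by
  have hsplit := hT.card_filter_rel_add_card_filter_rel (mem_univ v)
  have hdeg : #{u | T v u} = #{u | T u v} := by
    rw [← outdeg_eq_card_filter, ← outdeg_eq_card_filter (Function.swap T)]
    exact hreg v
  rw [card_univ, hcard] at hsplit
  omega

theorem card_filter_rel_add_card_filter_rel_of_forall_rel_mem {A R : Finset V} {n : ℕ}
    (hout : ∀ a ∈ A, #{u | T a u} = n) (hAR : Disjoint A R)
    (hclosed : ∀ a ∈ A, ∀ u, T a u → u ∈ A ∪ R) {a : V} (ha : a ∈ A) :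
    #{u ∈ A | T a u} + #{u ∈ R | T a u} = n := by
  rw [← card_union_of_disjoint (disjoint_filter_filter hAR), ← filter_union, ← hout a ha]
  congr 1
  ext u
  simpa using hclosed a ha u

theorem IsTournament.two_mul_sum_card_filter_rel_add (hT : IsTournament T) {A R : Finset V}
    {n : ℕ} (hout : ∀ a ∈ A, #{u | T a u} = n) (hAR : Disjoint A R)
    (hclosed : ∀ a ∈ A, ∀ u, T a u → u ∈ A ∪ R) :
    2 * ∑ a ∈ A, #{u ∈ R | T a u} + #A * (#A - 1) = 2 * n * #A := by
  calc 2 * ∑ a ∈ A, #{u ∈ R | T a u} + #A * (#A - 1)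
      = 2 * ∑ a ∈ A, (#{u ∈ A | T a u} + #{u ∈ R | T a u}) := by
        rw [← hT.two_mul_sum_card_filter_rel, sum_add_distrib]
        ring
    _ = 2 * n * #A := by
        rw [sum_congr rfl fun a ha =>
            card_filter_rel_add_card_filter_rel_of_forall_rel_mem hout hAR hclosed ha,
          sum_const, smul_eq_mul]
        ring

theorem IsTournament.two_mul_le_of_forall_rel_mem (hT : IsTournament T) {A R : Finset V}
    {n : ℕ} (hout : ∀ a ∈ A, #{u | T a u} = n) (hAR : Disjoint A R)
    (hclosed : ∀ a ∈ A, ∀ u, T a u → u ∈ A ∪ R) (hA : A.Nonempty) :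
    2 * n ≤ #A - 1 + 2 * #R := by
  have key := hT.two_mul_sum_card_filter_rel_add hout hAR hclosed
  have hle : ∑ a ∈ A, #{u ∈ R | T a u} ≤ #A * #R := by
    simpa using sum_le_card_nsmul A _ #R fun a _ => card_filter_le R (T a)
  refine Nat.le_of_mul_le_mul_left ?_ hA.card_pos
  nlinarith

theorem IsTournament.rel_of_forall_rel_mem (hT : IsTournament T) {A R : Finset V}
    {n : ℕ} (hout : ∀ a ∈ A, #{u | T a u} = n) (hAR : Disjoint A R)
    (hclosed : ∀ a ∈ A, ∀ u, T a u → u ∈ A ∪ R) (hn : #A - 1 + 2 * #R ≤ 2 * n) :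
    ∀ a ∈ A, ∀ u ∈ R, T a u := by
  have key := hT.two_mul_sum_card_filter_rel_add hout hAR hclosed
  have hle : ∀ a ∈ A, #{u ∈ R | T a u} ≤ #R := fun a _ => card_filter_le R (T a)
  have hsum : ∑ a ∈ A, #{u ∈ R | T a u} = ∑ a ∈ A, #R := by
    refine le_antisymm (sum_le_sum hle) ?_
    rw [sum_const, smul_eq_mul]
    nlinarith [Nat.mul_le_mul_left #A hn]
  intro a ha u hu
  have hfull := (sum_eq_sum_iff_of_le hle).1 hsum a ha
  rw [← eq_of_subset_of_card_le (filter_subset _ R) hfull.ge] at hu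
  exact (mem_filter.1 hu).2

theorem IsTournament.regularOn_of_forall_rel_mem (hT : IsTournament T) {A R : Finset V}
    {n : ℕ} (hout : ∀ a ∈ A, #{u | T a u} = n) (hAR : Disjoint A R)
    (hclosed : ∀ a ∈ A, ∀ u, T a u → u ∈ A ∪ R) (hn : #A + 2 * #R = 2 * n + 1) :
    RegularOn T ↑A := by
  have hdom := hT.rel_of_forall_rel_mem hout hAR hclosed (by omega)
  refine hT.regularOn_of_two_mul_card_filter_add_one fun a ha => ?_
  have hsplit := card_filter_rel_add_card_filter_rel_of_forall_rel_mem hout hAR hclosed ha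
  rw [filter_true_of_mem (hdom a ha)] at hsplit
  omega

/- With the notation of the proof sketch above: `X = outNbhdOff T S x y`, `Y = inNbhdOff T S x y`,
`A = outOnlyOff T S x y`, `C = outOnlyOff (swap T) S y x`, `B = R \ S = neitherOff T S x y`. -/
noncomputable def outNbhdOff (T : V → V → Prop) (S : Finset V) (x y : V) : Finset V :=
  {v | T x v ∧ v ∉ S ∧ v ≠ y}

noncomputable def inNbhdOff (T : V → V → Prop) (S : Finset V) (x y : V) : Finset V :=
  outNbhdOff (swap T) S y x

noncomputable def outOnlyOff (T : V → V → Prop) (S : Finset V) (x y : V) : Finset V :=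
  outNbhdOff T S x y \ inNbhdOff T S x y

noncomputable def neitherOff (T : V → V → Prop) (S : Finset V) (x y : V) : Finset V :=
  {v | v ∉ S ∧ v ≠ x ∧ v ≠ y ∧ v ∉ outNbhdOff T S x y ∧ v ∉ inNbhdOff T S x y}

variable {S : Finset V} {x y z u v : V}

@[simp]
theorem mem_outNbhdOff : v ∈ outNbhdOff T S x y ↔ T x v ∧ v ∉ S ∧ v ≠ y := by
  simp [outNbhdOff]

@[simp]
theorem mem_inNbhdOff : v ∈ inNbhdOff T S x y ↔ T v y ∧ v ∉ S ∧ v ≠ x := by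
  simp [inNbhdOff, outNbhdOff]

theorem mem_outOnlyOff :
    v ∈ outOnlyOff T S x y ↔ v ∈ outNbhdOff T S x y ∧ v ∉ inNbhdOff T S x y :=
  mem_sdiff

theorem mem_neitherOff : v ∈ neitherOff T S x y ↔
    v ∉ S ∧ v ≠ x ∧ v ≠ y ∧ v ∉ outNbhdOff T S x y ∧ v ∉ inNbhdOff T S x y := by
  simp only [neitherOff, mem_filter, mem_univ, true_and]

theorem inNbhdOff_swap : inNbhdOff (swap T) S y x = outNbhdOff T S x y := rfl

theorem neitherOff_swap : neitherOff (swap T) S y x = neitherOff T S x y := by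
  ext v
  simp only [mem_neitherOff, inNbhdOff_swap]
  tauto

theorem disjoint_neitherOff : Disjoint S (neitherOff T S x y) :=
  disjoint_left.2 fun _ hS hW => (mem_neitherOff.1 hW).1 hS

theorem right_notMem_outOnlyOff : y ∉ outOnlyOff T S x y :=
  fun hy => (mem_outNbhdOff.1 (mem_outOnlyOff.1 hy).1).2.2 rfl

theorem IsTournament.left_notMem_outOnlyOff (hT : IsTournament T) : x ∉ outOnlyOff T S x y :=
  fun hx => hT.irrefl x (mem_outNbhdOff.1 (mem_outOnlyOff.1 hx).1).1

theorem mem_inter_of_eq_singleton (hz : outNbhdOff T S x y ∩ inNbhdOff T S x y = {z}) :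
    z ∈ outNbhdOff T S x y ∧ z ∈ inNbhdOff T S x y :=
  mem_inter.1 (hz ▸ mem_singleton_self z)

theorem filter_rel_subset_insert_outNbhdOff :
    ({u | T x u} : Finset V) ⊆ insert y (outNbhdOff T S x y ∪ S) := by
  intro u hu
  rw [mem_filter] at hu
  by_cases huy : u = y
  · exact huy ▸ mem_insert_self _ _
  by_cases huS : u ∈ S
  · exact mem_insert_of_mem (mem_union_right _ huS)
  · exact mem_insert_of_mem (mem_union_left _ (mem_outNbhdOff.2 ⟨hu.2, huS, huy⟩))

structure Path3Free (T : V → V → Prop) (S : Finset V) (x y : V) (n : ℕ) : Prop where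
  isTournament : IsTournament T
  regular : RegularTournament T
  card_eq : Fintype.card V = 2 * n + 1
  not_hasPathOn : ¬HasPathOn T {v | v ∉ S} x y 3
  left_notMem : x ∉ S
  right_notMem : y ∉ S
  ne : x ≠ y

namespace Path3Free

variable {n : ℕ} {a b : V}

/-- Reversing all arcs and exchanging `x` and `y` exchanges `outNbhdOff` and `inNbhdOff` and fixes
`neitherOff`; every statement about `outOnlyOff T S x y` thus yields its mirror image for
`outOnlyOff (swap T) S y x`. -/
protected theorem swap (h : Path3Free T S x y n) : Path3Free (swap T) S y x n :=
  ⟨h.isTournament.swap, h.regular.swap, h.card_eq, fun hp => h.not_hasPathOn hp.reverse,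
    h.right_notMem, h.left_notMem, h.ne.symm⟩

theorem card_filter_rel (h : Path3Free T S x y n) (v : V) : #{u | T v u} = n :=
  h.regular.card_filter_rel h.isTournament h.card_eq v

/-- An arc `a → b` would close the path `x → a → b → y`. -/
theorem rel_of_mem_of_mem (h : Path3Free T S x y n) (ha : a ∈ outNbhdOff T S x y)
    (hb : b ∈ inNbhdOff T S x y) (hab : a ≠ b) : T b a := by
  rw [mem_outNbhdOff] at ha
  rw [mem_inNbhdOff] at hb
  have hT := h.isTournament
  refine hT.rel_of_not_rel hab fun hab' => h.not_hasPathOn ?_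
  exact hasPathOn_three h.left_notMem ha.2.1 hb.2.1 h.right_notMem ha.1 hab' hb.1
    (hT.ne_of_rel ha.1) hb.2.2.symm h.ne hab ha.2.2 (hT.ne_of_rel hb.1)

theorem card_inter_le_one (h : Path3Free T S x y n) :
    #(outNbhdOff T S x y ∩ inNbhdOff T S x y) ≤ 1 := by
  refine card_le_one.2 fun a ha b hb => ?_
  rw [mem_inter] at ha hb
  by_contra hab
  exact h.isTournament.asymm (h.rel_of_mem_of_mem hb.1 ha.2 (Ne.symm hab))
    (h.rel_of_mem_of_mem ha.1 hb.2 hab)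

theorem rel_of_notMem_outNbhdOff (h : Path3Free T S x y n) (hv : v ∉ outNbhdOff T S x y)
    (hvS : v ∉ S) (hvx : v ≠ x) (hvy : v ≠ y) : T v x :=
  h.isTournament.rel_of_not_rel hvx.symm fun hxv => hv (mem_outNbhdOff.2 ⟨hxv, hvS, hvy⟩)

theorem mem_of_mem_outOnlyOff_of_rel (h : Path3Free T S x y n) (ha : a ∈ outOnlyOff T S x y)
    (hau : T a u) : u ∈ outOnlyOff T S x y ∪ (S ∪ neitherOff T S x y) := by
  have hT := h.isTournament
  obtain ⟨haX, haY⟩ := mem_outOnlyOff.1 ha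
  obtain ⟨hxa, haS, -⟩ := mem_outNbhdOff.1 haX
  by_cases huS : u ∈ S
  · exact mem_union_right _ (mem_union_left _ huS)
  have hux : u ≠ x := by
    rintro rfl
    exact hT.asymm hxa hau
  have huy : u ≠ y := by
    rintro rfl
    exact haY (mem_inNbhdOff.2 ⟨hau, haS, (hT.ne_of_rel hxa).symm⟩)
  have huY : u ∉ inNbhdOff T S x y := fun huY =>
    hT.asymm hau (h.rel_of_mem_of_mem haX huY (hT.ne_of_rel hau))
  by_cases huX : u ∈ outNbhdOff T S x y
  · exact mem_union_left _ (mem_outOnlyOff.2 ⟨huX, huY⟩)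
  · exact mem_union_right _ (mem_union_right _ (mem_neitherOff.2 ⟨huS, hux, huy, huX, huY⟩))

theorem disjoint_outOnlyOff : Disjoint (outOnlyOff T S x y) (S ∪ neitherOff T S x y) := by
  refine disjoint_left.2 fun a ha haR => ?_
  obtain ⟨haX, -⟩ := mem_outOnlyOff.1 ha
  rcases mem_union.1 haR with haS | haW
  exacts [(mem_outNbhdOff.1 haX).2.1 haS, (mem_neitherOff.1 haW).2.2.2.1 haX]

theorem le_card_outNbhdOff (h : Path3Free T S x y n) : n ≤ #(outNbhdOff T S x y) + #S + 1 :=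
  h.card_filter_rel x ▸
    (card_le_card filter_rel_subset_insert_outNbhdOff).trans (card_insert_union_le _ _ _)

theorem rel_of_card_outNbhdOff_le (h : Path3Free T S x y n)
    (hle : #(outNbhdOff T S x y) + #S + 1 ≤ n) (hu : u ∈ insert y S) : T x u := by
  have heq := eq_of_subset_of_card_le filter_rel_subset_insert_outNbhdOff
    ((card_insert_union_le _ _ _).trans (hle.trans (h.card_filter_rel x).ge))
  have hu' : u ∈ insert y (outNbhdOff T S x y ∪ S) := by
    rcases mem_insert.1 hu with rfl | huS
    exacts [mem_insert_self _ _, mem_insert_of_mem (mem_union_right _ huS)]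
  rw [← heq, mem_filter] at hu'
  exact hu'.2

theorem card_union_add_card_add_card (h : Path3Free T S x y n) :
    #(outNbhdOff T S x y ∪ inNbhdOff T S x y) + #S + #(neitherOff T S x y) + 2 = 2 * n + 1 := by
  set K := outNbhdOff T S x y ∪ inNbhdOff T S x y ∪ S
  have hW : neitherOff T S x y = (insert x (insert y K))ᶜ := by
    ext v
    simp only [K, mem_neitherOff, mem_compl, mem_insert, mem_union]
    tauto
  have hyK : y ∉ K := by
    simp [K, h.right_notMem, h.isTournament.irrefl]
  have hxK : x ∉ insert y K := by
    simp [K, h.left_notMem, h.ne, h.isTournament.irrefl]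
  have hKS : Disjoint (outNbhdOff T S x y ∪ inNbhdOff T S x y) S :=
    disjoint_left.2 fun v hv hvS => by rcases mem_union.1 hv with hv | hv <;> simp_all
  have hcard := card_compl_add_card (insert x (insert y K))
  rw [← hW, card_insert_of_notMem hxK, card_insert_of_notMem hyK, card_union_of_disjoint hKS,
    h.card_eq] at hcard
  omega

theorem two_mul_le (h : Path3Free T S x y n) (hA : (outOnlyOff T S x y).Nonempty) :
    2 * n ≤ #(outOnlyOff T S x y) - 1 + 2 * (#S + #(neitherOff T S x y)) := by
  rw [← card_union_of_disjoint disjoint_neitherOff]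
  exact h.isTournament.two_mul_le_of_forall_rel_mem (fun a _ => h.card_filter_rel a)
    disjoint_outOnlyOff (fun _ ha _ hau => h.mem_of_mem_outOnlyOff_of_rel ha hau) hA

theorem card_eq_of_three_mul_card_add_one_le (h : Path3Free T S x y n) (hn : 3 ≤ n)
    (hS : 3 * #S + 1 ≤ n) :
    n = 3 * #S + 1 ∧ #(outNbhdOff T S x y ∩ inNbhdOff T S x y) = 1 ∧
      #(outNbhdOff T S x y) = 2 * #S ∧ #(outOnlyOff T S x y) = 2 * #S - 1 ∧
      #(outOnlyOff (swap T) S y x) = 2 * #S - 1 ∧ #(neitherOff T S x y) = #S + 2 := by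
  have hX := h.le_card_outNbhdOff
  have hY : n ≤ #(inNbhdOff T S x y) + #S + 1 := h.swap.le_card_outNbhdOff
  have hXY := h.card_inter_le_one
  have htot := h.card_union_add_card_add_card
  have hunion := card_union_add_card_inter (outNbhdOff T S x y) (inNbhdOff T S x y)
  have hA : #(outOnlyOff T S x y) + #(outNbhdOff T S x y ∩ inNbhdOff T S x y) =
      #(outNbhdOff T S x y) := card_sdiff_add_card_inter _ _
  have hC : #(outOnlyOff (swap T) S y x) + #(outNbhdOff T S x y ∩ inNbhdOff T S x y) =
      #(inNbhdOff T S x y) := by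
    rw [inter_comm]
    exact card_sdiff_add_card_inter _ _
  have hAn := h.two_mul_le (card_pos.1 (by omega))
  have hCn := h.swap.two_mul_le (card_pos.1 (by omega))
  rw [neitherOff_swap] at hCn
  omega

theorem forall_rel_of_mem_outOnlyOff (h : Path3Free T S x y n) (hn : 3 ≤ n)
    (hS : 3 * #S + 1 ≤ n) : ∀ a ∈ outOnlyOff T S x y, ∀ u ∈ S ∪ neitherOff T S x y, T a u := by
  obtain ⟨hnS, -, -, hA, -, hW⟩ := h.card_eq_of_three_mul_card_add_one_le hn hS
  refine h.isTournament.rel_of_forall_rel_mem (fun a _ => h.card_filter_rel a)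
    disjoint_outOnlyOff (fun _ ha _ hau => h.mem_of_mem_outOnlyOff_of_rel ha hau) ?_
  rw [card_union_of_disjoint disjoint_neitherOff]
  omega

theorem regularOn_outOnlyOff (h : Path3Free T S x y n) (hn : 3 ≤ n) (hS : 3 * #S + 1 ≤ n) :
    RegularOn T ↑(outOnlyOff T S x y) := by
  obtain ⟨hnS, -, -, hA, -, hW⟩ := h.card_eq_of_three_mul_card_add_one_le hn hS
  refine h.isTournament.regularOn_of_forall_rel_mem (fun a _ => h.card_filter_rel a)
    disjoint_outOnlyOff (fun _ ha _ hau => h.mem_of_mem_outOnlyOff_of_rel ha hau) ?_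
  rw [card_union_of_disjoint disjoint_neitherOff]
  omega

theorem rel_of_mem_insert (h : Path3Free T S x y n) (hn : 3 ≤ n) (hS : 3 * #S + 1 ≤ n)
    (hu : u ∈ insert y S) : T x u := by
  obtain ⟨hnS, -, hX, -⟩ := h.card_eq_of_three_mul_card_add_one_le hn hS
  exact h.rel_of_card_outNbhdOff_le (by omega) hu

theorem notMem_insert_iff (h : Path3Free T S x y n)
    (hz : outNbhdOff T S x y ∩ inNbhdOff T S x y = {z}) :
    u ∉ insert z (neitherOff T S x y ∪ S) ↔
      u = x ∨ u = y ∨ u ∈ outOnlyOff T S x y ∨ u ∈ outOnlyOff (swap T) S y x := by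
  have hu := Finset.ext_iff.1 hz u
  have hzXY := mem_inter_of_eq_singleton hz
  have hirr := h.isTournament.irrefl
  have hxS := h.left_notMem
  have hyS := h.right_notMem
  have hxy := h.ne
  simp only [mem_inter, mem_singleton, mem_outNbhdOff, mem_inNbhdOff] at hu hzXY
  simp only [mem_insert, mem_union, mem_neitherOff, mem_outOnlyOff, inNbhdOff_swap,
    mem_outNbhdOff, mem_inNbhdOff, swap]
  grind

theorem union_eq_univ (h : Path3Free T S x y n)
    (hz : outNbhdOff T S x y ∩ inNbhdOff T S x y = {z}) :
    ({x, y, z} ∪ ↑(outOnlyOff T S x y) ∪ ↑(neitherOff T S x y) ∪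
      ↑(outOnlyOff (swap T) S y x) ∪ ↑S : Set V) = Set.univ := by
  refine Set.eq_univ_of_forall fun u => ?_
  have hu := h.notMem_insert_iff (u := u) hz
  simp only [mem_insert, mem_union] at hu
  simp only [Set.mem_union, Set.mem_insert_iff, Set.mem_singleton_iff, mem_coe]
  tauto

theorem pairwise_disjoint (h : Path3Free T S x y n)
    (hz : outNbhdOff T S x y ∩ inNbhdOff T S x y = {z}) :
    List.Pairwise Disjoint [({x, y, z} : Set V), ↑(outOnlyOff T S x y), ↑(neitherOff T S x y),
      ↑(outOnlyOff (swap T) S y x), ↑S] := by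
  have hXY := fun u => Finset.ext_iff.1 hz u
  have hzXY := mem_inter_of_eq_singleton hz
  have hirr := h.isTournament.irrefl
  have hxS := h.left_notMem
  have hyS := h.right_notMem
  simp only [mem_inter, mem_singleton, mem_outNbhdOff, mem_inNbhdOff] at hXY hzXY
  simp only [List.pairwise_cons, List.mem_cons, List.not_mem_nil, or_false, forall_eq_or_imp,
    forall_eq, Set.disjoint_left, Set.mem_insert_iff, Set.mem_singleton_iff, mem_coe,
    mem_neitherOff, mem_outOnlyOff, inNbhdOff_swap, mem_outNbhdOff, mem_inNbhdOff, swap]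
  grind

theorem dom_outOnlyOff_swap (h : Path3Free T S x y n) {E : Set V}
    (hE : E ⊆ ↑(outNbhdOff T S x y)) : Dom T ↑(outOnlyOff (swap T) S y x) E := by
  intro c hc a ha
  obtain ⟨hcY, hcX⟩ := mem_outOnlyOff.1 (mem_coe.1 hc)
  exact h.rel_of_mem_of_mem (hE ha) hcY fun hac => hcX (hac ▸ hE ha)

theorem dom_singleton_outOnlyOff (h : Path3Free T S x y n) (hz : z ∈ inNbhdOff T S x y) :
    Dom T {z} ↑(outOnlyOff T S x y) :=
  dom_swap.1 (h.swap.dom_outOnlyOff_swap (Set.singleton_subset_iff.2 hz))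

theorem dom_outOnlyOff_neitherOff (h : Path3Free T S x y n) (hn : 3 ≤ n)
    (hS : 3 * #S + 1 ≤ n) : Dom T ↑(outOnlyOff T S x y) (↑(neitherOff T S x y) ∪ ↑S) :=
  fun a ha u hu => h.forall_rel_of_mem_outOnlyOff hn hS a ha u (mem_union.2 (Or.symm hu))

theorem dom_neitherOff_union_outOnlyOff_swap (h : Path3Free T S x y n) (hn : 3 ≤ n)
    (hS : 3 * #S + 1 ≤ n) :
    Dom T (↑(neitherOff T S x y) ∪ ↑S) ↑(outOnlyOff (swap T) S y x) := by
  simpa [neitherOff_swap] using dom_swap.1 (h.swap.dom_outOnlyOff_neitherOff hn hS)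

theorem dom_singleton_left (h : Path3Free T S x y n) (hn : 3 ≤ n) (hS : 3 * #S + 1 ≤ n)
    (hz : z ∈ outNbhdOff T S x y) : Dom T {x} ({y, z} ∪ ↑(outOnlyOff T S x y) ∪ ↑S) := by
  intro w hw u hu
  rw [Set.mem_singleton_iff.1 hw]
  simp only [Set.mem_union, Set.mem_insert_iff, Set.mem_singleton_iff, mem_coe] at hu
  rcases hu with ((rfl | rfl) | ha) | hu
  · exact h.rel_of_mem_insert hn hS (mem_insert_self _ _)
  · exact (mem_outNbhdOff.1 hz).1
  · exact (mem_outNbhdOff.1 (mem_outOnlyOff.1 ha).1).1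
  · exact h.rel_of_mem_insert hn hS (mem_insert_of_mem hu)

theorem dom_singleton_right (h : Path3Free T S x y n) :
    Dom T {y} (↑(outOnlyOff T S x y) ∪ ↑(neitherOff T S x y)) := by
  intro w hw u hu
  rw [Set.mem_singleton_iff.1 hw]
  have hT := h.isTournament
  obtain ⟨huY, huS, hux, huy⟩ : u ∉ inNbhdOff T S x y ∧ u ∉ S ∧ u ≠ x ∧ u ≠ y := by
    rcases hu with ha | hb
    · obtain ⟨haX, haY⟩ := mem_outOnlyOff.1 ha
      obtain ⟨hxa, haS, hay⟩ := mem_outNbhdOff.1 haX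
      exact ⟨haY, haS, (hT.ne_of_rel hxa).symm, hay⟩
    · obtain ⟨hbS, hbx, hby, -, hbY⟩ := mem_neitherOff.1 hb
      exact ⟨hbY, hbS, hbx, hby⟩
  exact h.swap.rel_of_notMem_outNbhdOff huY huS huy hux

theorem card_filter_compl_rel_center (h : Path3Free T S x y n) (hn : 3 ≤ n)
    (hS : 3 * #S + 1 ≤ n) (hz : outNbhdOff T S x y ∩ inNbhdOff T S x y = {z}) :
    #{u ∈ (insert z (neitherOff T S x y ∪ S))ᶜ | T z u} = 2 * #S := by
  obtain ⟨hnS, -, -, hA, -, -⟩ := h.card_eq_of_three_mul_card_add_one_le hn hS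
  obtain ⟨hzX, hzY⟩ := mem_inter_of_eq_singleton hz
  have hcompl := fun u => h.notMem_insert_iff (u := u) hz
  rw [h.isTournament.filter_rel_eq (E := insert y (outOnlyOff T S x y)),
    card_insert_of_notMem right_notMem_outOnlyOff]
  · omega
  · intro u hu
    rw [mem_compl, hcompl]
    rw [mem_insert] at hu
    tauto
  · intro u hu
    rcases mem_insert.1 hu with rfl | ha
    exacts [(mem_inNbhdOff.1 hzY).1, h.dom_singleton_outOnlyOff hzY z rfl u ha]
  · intro u hu huE
    rcases (hcompl u).1 (mem_compl.1 hu) with rfl | rfl | ha | hc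
    · exact (mem_outNbhdOff.1 hzX).1
    · exact absurd (mem_insert_self _ _) huE
    · exact absurd (mem_insert_of_mem ha) huE
    · exact h.dom_outOnlyOff_swap (Set.singleton_subset_iff.2 hzX) u hc z rfl

theorem card_filter_compl_rel_of_mem_neitherOff (h : Path3Free T S x y n) (hn : 3 ≤ n)
    (hS : 3 * #S + 1 ≤ n) (hz : outNbhdOff T S x y ∩ inNbhdOff T S x y = {z})
    (hv : v ∈ neitherOff T S x y) :
    #{u ∈ (insert z (neitherOff T S x y ∪ S))ᶜ | T v u} = 2 * #S := by
  obtain ⟨hnS, -, -, -, hC, -⟩ := h.card_eq_of_three_mul_card_add_one_le hn hS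
  have hcompl := fun u => h.notMem_insert_iff (u := u) hz
  rw [h.isTournament.filter_rel_eq (E := insert x (outOnlyOff (swap T) S y x)),
    card_insert_of_notMem right_notMem_outOnlyOff]
  · omega
  · intro u hu
    rw [mem_compl, hcompl]
    rw [mem_insert] at hu
    tauto
  · intro u hu
    rcases mem_insert.1 hu with rfl | hc
    · exact h.swap.dom_singleton_right u rfl v (Or.inr (by simpa [neitherOff_swap] using hv))
    · exact h.dom_neitherOff_union_outOnlyOff_swap hn hS v (Or.inl hv) u hc
  · intro u hu huE
    rcases (hcompl u).1 (mem_compl.1 hu) with rfl | rfl | ha | hc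
    · exact absurd (mem_insert_self _ _) huE
    · exact h.dom_singleton_right u rfl v (Or.inr hv)
    · exact h.dom_outOnlyOff_neitherOff hn hS u ha v (Or.inl hv)
    · exact absurd (mem_insert_of_mem hc) huE

theorem card_filter_compl_rel_of_mem (h : Path3Free T S x y n) (hn : 3 ≤ n)
    (hS : 3 * #S + 1 ≤ n) (hz : outNbhdOff T S x y ∩ inNbhdOff T S x y = {z}) (hv : v ∈ S) :
    #{u ∈ (insert z (neitherOff T S x y ∪ S))ᶜ | T v u} = 2 * #S := by
  obtain ⟨hnS, -, -, -, hC, -⟩ := h.card_eq_of_three_mul_card_add_one_le hn hS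
  have hcompl := fun u => h.notMem_insert_iff (u := u) hz
  rw [h.isTournament.filter_rel_eq (E := insert y (outOnlyOff (swap T) S y x)),
    card_insert_of_notMem h.isTournament.swap.left_notMem_outOnlyOff]
  · omega
  · intro u hu
    rw [mem_compl, hcompl]
    rw [mem_insert] at hu
    tauto
  · intro u hu
    rcases mem_insert.1 hu with rfl | hc
    · exact h.swap.rel_of_mem_insert hn hS (mem_insert_of_mem hv)
    · exact h.dom_neitherOff_union_outOnlyOff_swap hn hS v (Or.inr hv) u hc
  · intro u hu huE
    rcases (hcompl u).1 (mem_compl.1 hu) with rfl | rfl | ha | hc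
    · exact h.rel_of_mem_insert hn hS (mem_insert_of_mem hv)
    · exact absurd (mem_insert_self _ _) huE
    · exact h.dom_outOnlyOff_neitherOff hn hS u ha v (Or.inr hv)
    · exact absurd (mem_insert_of_mem hc) huE

theorem regularOn_insert (h : Path3Free T S x y n) (hn : 3 ≤ n) (hS : 3 * #S + 1 ≤ n)
    (hz : outNbhdOff T S x y ∩ inNbhdOff T S x y = {z}) :
    RegularOn T ↑(insert z (neitherOff T S x y ∪ S)) := by
  obtain ⟨hnS, -, -, -, -, hW⟩ := h.card_eq_of_three_mul_card_add_one_le hn hS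
  have hcard : #(insert z (neitherOff T S x y ∪ S)) = 2 * #S + 3 := by
    rw [card_insert_of_notMem, card_union_of_disjoint disjoint_neitherOff.symm]
    · omega
    · obtain ⟨hzX, -⟩ := mem_inter_of_eq_singleton hz
      rw [mem_union, mem_neitherOff]
      exact fun hzWS => hzWS.elim (fun hzW => hzW.2.2.2.1 hzX) (mem_outNbhdOff.1 hzX).2.1
  refine h.isTournament.regularOn_of_two_mul_card_filter_add_one fun v hv => ?_
  have hsplit := card_filter_add_card_filter_compl (insert z (neitherOff T S x y ∪ S)) (T v)
  have hout : #{u ∈ (insert z (neitherOff T S x y ∪ S))ᶜ | T v u} = 2 * #S := by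
    rcases mem_insert.1 hv with rfl | hv
    · exact h.card_filter_compl_rel_center hn hS hz
    rcases mem_union.1 hv with hw | hs
    exacts [h.card_filter_compl_rel_of_mem_neitherOff hn hS hz hw,
      h.card_filter_compl_rel_of_mem hn hS hz hs]
  rw [h.card_filter_rel, hout] at hsplit
  omega

theorem familyGData (h : Path3Free T S x y n) (hn : 3 ≤ n) (hS : 3 * #S + 1 ≤ n) :
    FamilyGData T x y ↑S := by
  obtain ⟨hnS, hXY, -, hA, hC, hW⟩ := h.card_eq_of_three_mul_card_add_one_le hn hS
  obtain ⟨z, hz⟩ := card_eq_one.1 hXY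
  obtain ⟨hzX, hzY⟩ := mem_inter_of_eq_singleton hz
  have hD : ({z} ∪ ↑(neitherOff T S x y) ∪ ↑S : Set V) =
      ↑(insert z (neitherOff T S x y ∪ S)) := by
    push_cast
    rw [Set.insert_eq, Set.union_assoc]
  have hWCx : Dom T (↑(neitherOff T S x y) ∪ ↑(outOnlyOff (swap T) S y x)) {x} := by
    rw [Set.union_comm, ← neitherOff_swap (T := T)]
    exact dom_swap.1 h.swap.dom_singleton_right
  refine ⟨h.isTournament, h.regular, #S, z, _, _, _, by omega, ?_, by simpa using hA,
    by simpa using hC, by simpa using hW, by simp, h.ne,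
    h.isTournament.ne_of_rel (mem_outNbhdOff.1 hzX).1, (mem_outNbhdOff.1 hzX).2.2.symm,
    h.union_eq_univ hz, h.pairwise_disjoint hz, h.regularOn_outOnlyOff hn hS,
    regularOn_swap.1 (h.swap.regularOn_outOnlyOff hn hS), hD ▸ h.regularOn_insert hn hS hz,
    h.dom_outOnlyOff_neitherOff hn hS, h.dom_neitherOff_union_outOnlyOff_swap hn hS,
    h.dom_outOnlyOff_swap fun a ha => (mem_outOnlyOff.1 ha).1,
    h.dom_outOnlyOff_swap (Set.singleton_subset_iff.2 hzX), h.dom_singleton_outOnlyOff hzY,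
    h.dom_singleton_left hn hS hzX, dom_swap.1 (h.swap.dom_singleton_left hn hS hzY),
    h.dom_singleton_right, hWCx⟩
  rw [Nat.card_eq_fintype_card, h.card_eq, hnS]
  ring

end Path3Free

end Fintype

/-- Lemma 3.2(i): in a regular tournament of order 2n+1, n ≥ 3, with |S| ≤ (n−1)/3 and
x ≠ y outside S, either T − S has an (x,y)-path of length 3 or T belongs to 𝒢. -/
theorem stmt15 {V : Type*} [Fintype V] (T : V → V → Prop)
    (hT : IsTournament T) (hreg : RegularTournament T) (n : ℕ) (hn : 3 ≤ n)
    (hcard : Fintype.card V = 2 * n + 1) (S : Set V) (hS : 3 * S.ncard + 1 ≤ n)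
    (x y : V) (hxy : x ≠ y) (hxS : x ∉ S) (hyS : y ∉ S) :
    HasPathOn T {v | v ∉ S} x y 3 ∨
      ∃ (x' y' : V) (S' : Set V), FamilyGData T x' y' S' := by
  by_cases hpath : HasPathOn T {v | v ∉ S} x y 3
  · exact Or.inl hpath
  have h : Path3Free T S.toFinset x y n :=
    ⟨hT, hreg, hcard, by simpa using hpath, by simpa using hxS, by simpa using hyS, hxy⟩
  rw [Set.ncard_eq_toFinset_card'] at hS
  exact Or.inr ⟨x, y, _, h.familyGData hn hS⟩
end

section
/- Let G be a tournament in the family 𝒢 with distinguished vertices x, y and distinguished subset S as in the definition of 𝒢. Then G − S contains no directed (x,y)-path of length 3. -/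
/-!
An out-neighbour of `x` outside `S ∪ {y}` lies in `{z} ∪ A`, since `B ∪ C → x`; an in-neighbour
of `y` outside `S ∪ {x}` lies in `{z} ∪ C`, since `y → A ∪ B`. But `C → z → A` and `C → A`, so
no arc goes from `{z} ∪ A` to `{z} ∪ C` at all, and the middle arc of the path cannot exist.
-/

variable {V : Type*}

variable {T : V → V → Prop}

theorem IsTournament.asymm_s16 (hT : IsTournament T) {u v : V} (huv : T u v) : ¬ T v u := by
  by_cases h : u = v
  · subst h
    exact absurd huv (hT.1 u)
  · exact (hT.2 u v h).mp huv

theorem IsTournament.not_rel_of_dom (hT : IsTournament T) {X Y : Set V} (h : Dom T X Y)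
    {a b : V} (ha : a ∈ Y) (hb : b ∈ X) : ¬ T a b :=
  hT.asymm_s16 (h b hb a ha)

theorem HasPathOn.exists_of_three {D : Set V} {x y : V} (h : HasPathOn T D x y 3) :
    ∃ a b, a ∈ D ∧ b ∈ D ∧ a ≠ y ∧ b ≠ x ∧ a ≠ b ∧ T x a ∧ T a b ∧ T b y := by
  obtain ⟨f, hinj, rfl, rfl, hD, harc⟩ := h
  exact ⟨f 1, f 2, hD 1, hD 2, hinj.ne (by decide), hinj.ne (by decide), hinj.ne (by decide),
    harc 0, harc 1, harc 2⟩

theorem FamilyGData.exists_no_arc_between_nbrs {x y : V} {S : Set V}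
    (hG : FamilyGData T x y S) :
    ∃ P Q : Set V, (∀ a ∉ S, a ≠ y → T x a → a ∈ P) ∧ (∀ b ∉ S, b ≠ x → T b y → b ∈ Q) ∧
      ∀ a ∈ P, ∀ b ∈ Q, a ≠ b → ¬ T a b := by
  obtain ⟨hT, -, -, z, A, B, C, -, -, -, -, -, -, -, -, -, huniv, -, -, -, -, -, -, hCA, hCz,
    hzA, hx, -, hyAB, hBCx⟩ := hG
  have hmem : ∀ v, v = x ∨ v = y ∨ v = z ∨ v ∈ A ∨ v ∈ B ∨ v ∈ C ∨ v ∈ S := by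
    intro v
    have hv : v ∈ ({x, y, z} ∪ A ∪ B ∪ C ∪ S : Set V) := huniv ▸ Set.mem_univ v
    simpa only [Set.mem_union, Set.mem_insert_iff, Set.mem_singleton_iff, or_assoc] using hv
  refine ⟨insert z A, insert z C, fun a haS hay hxa => ?_, fun b hbS hbx hby => ?_, ?_⟩
  · rcases hmem a with rfl | rfl | rfl | ha | ha | ha | ha
    · exact absurd hxa (hT.1 a)
    · exact absurd rfl hay
    · exact .inl rfl
    · exact .inr ha
    · exact absurd hxa (hT.not_rel_of_dom hBCx rfl (.inl ha))
    · exact absurd hxa (hT.not_rel_of_dom hBCx rfl (.inr ha))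
    · exact absurd ha haS
  · rcases hmem b with rfl | rfl | rfl | hb | hb | hb | hb
    · exact absurd rfl hbx
    · exact absurd hby (hT.1 b)
    · exact .inl rfl
    · exact absurd hby (hT.not_rel_of_dom hyAB (.inl hb) rfl)
    · exact absurd hby (hT.not_rel_of_dom hyAB (.inr hb) rfl)
    · exact .inr hb
    · exact absurd hb hbS
  · rintro a (rfl | ha) b (rfl | hb) hab
    · exact absurd rfl hab
    · exact hT.not_rel_of_dom hCz rfl hb
    · exact hT.not_rel_of_dom hzA ha rfl
    · exact hT.not_rel_of_dom hCA ha hb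

/-- If G ∈ 𝒢 with distinguished x, y, S, then G − S has no (x,y)-path of length 3. -/
theorem stmt16 {V : Type*} (T : V → V → Prop) (x y : V) (S : Set V)
    (hG : FamilyGData T x y S) :
    ¬ HasPathOn T {v | v ∉ S} x y 3 := by
  intro hpath
  obtain ⟨a, b, haS, hbS, hay, hbx, hne, hxa, hab, hby⟩ := hpath.exists_of_three
  obtain ⟨P, Q, hP, hQ, hPQ⟩ := hG.exists_no_arc_between_nbrs
  exact hPQ a (hP a haS hay hxa) b (hQ b hbS hbx hby) hne hab
end
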